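/- For any c ∈ [0, 1), ∫₀^∞ u I₁(c u) K₀(u) du = (π c/4) · ₂F₁(3/2, 3/2; 2; c²), where I₁ is the modified Bessel function of the first kind of order one and K₀ the modified Bessel function of the second kind of order zero. -/

import Mathlib

open Real MeasureTheory

/-- The modified Bessel function of the first kind of order one. -/
noncomputable def I1 (x : ℝ) : ℝ :=
  (x / 2) * ∑' k : ℕ, (x^2/4)^k / ((Nat.factorial k : ℝ) * Real.Gamma (k + 2))

/-- The modified Bessel function of the second kind of order zero. -/
noncomputable def K0 (x : ℝ) : ℝ := ∫ t in Set.Ioi (0:ℝ), Real.exp (-(x * Real.cosh t))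

/-- The Gauss hypergeometric function `₂F₁(a, b; c; x)`. -/
noncomputable def twoF1 (a b c x : ℝ) : ℝ :=
  (Real.Gamma c / (Real.Gamma a * Real.Gamma b)) *
    ∑' k : ℕ, Real.Gamma (k + a) * Real.Gamma (k + b) / Real.Gamma (k + c)
      * x^k / (Nat.factorial k : ℝ)

/-!
Expand `u * I₁(c u)` in its power series and integrate term by term against `K₀`. By Tonelli in
`K₀(u) = ∫₀^∞ exp (-u cosh t) dt`, the moment `∫ u^m K₀(u) du` equals `m! ∫ (cosh t)^{-(m+1)} dt`;
for `m = 2k + 2` the substitution `x = sinh t` turns this into the Wallis integral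
`∫ (1 + x²)^{-(k+2)} dx`, computed by integration by parts, and Legendre's duplication formula
brings the moment to the form `2^{2k+1} Γ(k + 3/2)²`. The resulting series is `c` times the
hypergeometric series of `₂F₁(3/2, 3/2; 2; c²)`, which converges for `c < 1` because log-convexity
of `Γ` gives `Γ(k + 3/2)² ≤ k! Γ(k + 2)`.
-/

open Set Filter Topology
open scoped Nat

lemma integrable_inv_one_add_sq_pow (n : ℕ) :
    Integrable fun x : ℝ => ((1 + x ^ 2) ^ (n + 1))⁻¹ := by
  refine integrable_inv_one_add_sq.mono' (by fun_prop) (ae_of_all _ fun x => ?_)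
  have h1 : 1 ≤ 1 + x ^ 2 := by nlinarith [sq_nonneg x]
  rw [Real.norm_of_nonneg (by positivity)]
  exact inv_anti₀ (by positivity) (le_self_pow₀ h1 (by omega))

lemma hasDerivAt_mul_inv_one_add_sq_pow (n : ℕ) (x : ℝ) :
    HasDerivAt (fun x : ℝ => x * ((1 + x ^ 2) ^ (n + 1))⁻¹)
      ((2 * (n : ℝ) + 2) * ((1 + x ^ 2) ^ (n + 2))⁻¹
        - (2 * (n : ℝ) + 1) * ((1 + x ^ 2) ^ (n + 1))⁻¹) x := by
  have hpow : HasDerivAt (fun x : ℝ => (1 + x ^ 2) ^ (n + 1))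
      ((n + 1 : ℕ) * (1 + x ^ 2) ^ n * (2 * x)) x := by
    simpa using ((hasDerivAt_pow 2 x).const_add 1).fun_pow (n + 1)
  have h : HasDerivAt (fun x : ℝ => x * ((1 + x ^ 2) ^ (n + 1))⁻¹) _ x :=
    (hasDerivAt_id' x).fun_mul (hpow.fun_inv (by positivity))
  convert h using 1
  have : (0 : ℝ) < 1 + x ^ 2 := by positivity
  field_simp
  push_cast
  ring

lemma tendsto_mul_inv_one_add_sq_pow_atTop (n : ℕ) :
    Tendsto (fun x : ℝ => x * ((1 + x ^ 2) ^ (n + 1))⁻¹) atTop (𝓝 0) := by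
  refine squeeze_zero' ?_ ?_ tendsto_inv_atTop_zero
  · filter_upwards [eventually_ge_atTop 0] with x hx using by positivity
  · filter_upwards [eventually_gt_atTop 0] with x hx
    have h1 : x ^ 2 ≤ (1 + x ^ 2) ^ (n + 1) :=
      (le_add_of_nonneg_left zero_le_one).trans (le_self_pow₀ (by nlinarith) (by omega))
    calc x * ((1 + x ^ 2) ^ (n + 1))⁻¹ ≤ x * (x ^ 2)⁻¹ := by gcongr
      _ = x⁻¹ := by field_simp

lemma integral_inv_one_add_sq_pow_succ (n : ℕ) :
    (2 * (n : ℝ) + 2) * ∫ x in Ioi (0 : ℝ), ((1 + x ^ 2) ^ (n + 2))⁻¹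
      = (2 * (n : ℝ) + 1) * ∫ x in Ioi (0 : ℝ), ((1 + x ^ 2) ^ (n + 1))⁻¹ := by
  have hint (m : ℕ) := (integrable_inv_one_add_sq_pow m).integrableOn (s := Ioi 0)
  have h := integral_Ioi_of_hasDerivAt_of_tendsto'
    (fun x _ => hasDerivAt_mul_inv_one_add_sq_pow n x)
    (((hint (n + 1)).const_mul _).sub ((hint n).const_mul _))
    (tendsto_mul_inv_one_add_sq_pow_atTop n)
  rw [integral_sub ((hint (n + 1)).const_mul _) ((hint n).const_mul _),
    integral_const_mul, integral_const_mul] at h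
  simpa [sub_eq_zero] using h

theorem integral_inv_one_add_sq_pow (n : ℕ) :
    ∫ x in Ioi (0 : ℝ), ((1 + x ^ 2) ^ (n + 1))⁻¹
      = √π * Real.Gamma (n + 1 / 2) / (2 * Real.Gamma (n + 1)) := by
  induction n with
  | zero =>
    simp only [zero_add, pow_one, CharP.cast_eq_zero, Real.Gamma_one_half_eq, Real.Gamma_one,
      integral_Ioi_inv_one_add_sq, arctan_zero, sub_zero]
    rw [Real.mul_self_sqrt pi_pos.le]
    ring
  | succ n ih =>
    have hrec := integral_inv_one_add_sq_pow_succ n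
    rw [ih] at hrec
    have hG1 : Real.Gamma (n + 1 / 2 + 1) = (n + 1 / 2) * Real.Gamma (n + 1 / 2) :=
      Real.Gamma_add_one (by positivity)
    have hG2 : Real.Gamma (n + 1 + 1) = (n + 1) * Real.Gamma (n + 1) :=
      Real.Gamma_add_one (by positivity)
    have : 0 < Real.Gamma (n + 1) := Real.Gamma_pos_of_pos (by positivity)
    push_cast
    rw [show (n : ℝ) + 1 + 1 / 2 = n + 1 / 2 + 1 by ring, hG1, hG2]
    field_simp at hrec ⊢
    linarith

lemma lintegral_inv_cosh_pow (n : ℕ) :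
    ∫⁻ t in Ioi (0 : ℝ), ENNReal.ofReal ((cosh t ^ (2 * n + 1))⁻¹)
      = ∫⁻ x in Ioi (0 : ℝ), ENNReal.ofReal (((1 + x ^ 2) ^ (n + 1))⁻¹) := by
  have himage : sinh '' Ioi 0 = Ioi 0 := by
    simpa using Real.sinhOrderIso.image_Ioi (0 : ℝ)
  conv_rhs => rw [← himage]
  rw [lintegral_image_eq_lintegral_abs_deriv_mul measurableSet_Ioi
    (fun t _ => (Real.hasDerivAt_sinh t).hasDerivWithinAt) Real.sinh_injective.injOn]
  refine setLIntegral_congr_fun measurableSet_Ioi fun t _ => ?_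
  have hcosh := cosh_pos t
  rw [abs_of_pos hcosh, ← ENNReal.ofReal_mul hcosh.le, add_comm (1 : ℝ), ← cosh_sq,
    ← pow_mul]
  congr 1
  field_simp
  ring

lemma integral_pow_mul_exp_neg_mul {a : ℝ} (ha : 0 < a) (m : ℕ) :
    ∫ u in Ioi (0 : ℝ), u ^ m * exp (-(a * u)) = m ! / a ^ (m + 1) := by
  have h := Real.integral_rpow_mul_exp_neg_mul_Ioi (a := m + 1) (by positivity) ha
  simp only [add_sub_cancel_right, Real.rpow_natCast] at h
  rw [h, Real.Gamma_nat_eq_factorial, show (m : ℝ) + 1 = (m + 1 : ℕ) by push_cast; ring,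
    Real.rpow_natCast, div_pow, one_pow, one_div_mul_eq_div]

lemma lintegral_pow_mul_exp_neg_mul {a : ℝ} (ha : 0 < a) (m : ℕ) :
    ∫⁻ u in Ioi (0 : ℝ), ENNReal.ofReal (u ^ m * exp (-(a * u)))
      = ENNReal.ofReal (m ! / a ^ (m + 1)) := by
  have hval := integral_pow_mul_exp_neg_mul ha m
  have hint : IntegrableOn (fun u : ℝ => u ^ m * exp (-(a * u))) (Ioi 0) :=
    Integrable.of_integral_ne_zero (by rw [hval]; positivity)
  rw [← hval, ofReal_integral_eq_lintegral_ofReal hint]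
  filter_upwards [ae_restrict_mem measurableSet_Ioi] with u (hu : 0 < u) using by positivity

lemma integrableOn_exp_neg_mul_cosh {x : ℝ} (hx : 0 < x) :
    IntegrableOn (fun t => exp (-(x * cosh t))) (Ioi 0) := by
  refine (exp_neg_integrableOn_Ioi 0 hx).mono' (by fun_prop) (ae_of_all _ fun t => ?_)
  have ht : t ≤ cosh t := by
    rcases le_total t 0 with ht | ht
    · exact ht.trans (cosh_pos t).le
    · exact (Real.self_le_sinh_iff.mpr ht).trans (Real.sinh_lt_cosh t).le
  rw [Real.norm_of_nonneg (exp_pos _).le, exp_le_exp]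
  nlinarith

lemma K0_nonneg (x : ℝ) : 0 ≤ K0 x := integral_nonneg fun _ => (exp_pos _).le

lemma ofReal_K0 {x : ℝ} (hx : 0 < x) :
    ENNReal.ofReal (K0 x) = ∫⁻ t in Ioi (0 : ℝ), ENNReal.ofReal (exp (-(x * cosh t))) :=
  ofReal_integral_eq_lintegral_ofReal (integrableOn_exp_neg_mul_cosh hx)
    (ae_of_all _ fun _ => (exp_pos _).le)

@[fun_prop]
lemma measurable_K0 : Measurable K0 :=
  (Continuous.stronglyMeasurable (f := fun p : ℝ × ℝ => exp (-(p.1 * cosh p.2))) (by fun_prop)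
    ).integral_prod_right'.measurable

lemma lintegral_pow_mul_K0_eq_factorial_mul_lintegral (m : ℕ) :
    ∫⁻ u in Ioi (0 : ℝ), ENNReal.ofReal (u ^ m * K0 u)
      = ENNReal.ofReal (m !)
          * ∫⁻ t in Ioi (0 : ℝ), ENNReal.ofReal ((cosh t ^ (m + 1))⁻¹) := by
  have hmeas : Measurable (Function.uncurry fun u t : ℝ =>
      ENNReal.ofReal (u ^ m * exp (-(cosh t * u)))) := by
    fun_prop
  calc ∫⁻ u in Ioi (0 : ℝ), ENNReal.ofReal (u ^ m * K0 u)
      = ∫⁻ u in Ioi (0 : ℝ), ∫⁻ t in Ioi (0 : ℝ),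
          ENNReal.ofReal (u ^ m * exp (-(u * cosh t))) := by
        refine setLIntegral_congr_fun measurableSet_Ioi fun u (hu : 0 < u) => ?_
        rw [ENNReal.ofReal_mul (by positivity), ofReal_K0 hu,
          ← lintegral_const_mul' _ _ ENNReal.ofReal_ne_top]
        simp_rw [← ENNReal.ofReal_mul (pow_nonneg hu.le m)]
    _ = ∫⁻ t in Ioi (0 : ℝ), ∫⁻ u in Ioi (0 : ℝ),
          ENNReal.ofReal (u ^ m * exp (-(cosh t * u))) := by
        simp_rw [mul_comm _ (cosh _)]
        exact lintegral_lintegral_swap hmeas.aemeasurable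
    _ = ∫⁻ t in Ioi (0 : ℝ),
          ENNReal.ofReal (m !) * ENNReal.ofReal ((cosh t ^ (m + 1))⁻¹) := by
        refine lintegral_congr fun t => ?_
        rw [lintegral_pow_mul_exp_neg_mul (cosh_pos t), div_eq_mul_inv,
          ENNReal.ofReal_mul (by positivity)]
    _ = _ := lintegral_const_mul' _ _ ENNReal.ofReal_ne_top

lemma Gamma_add_three_halves_mul_Gamma_add_two (k : ℕ) :
    2 ^ (2 * k + 2) * (Real.Gamma (k + 3 / 2) * Real.Gamma (k + 2)) = (2 * k + 2)! * √π := by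
  have h := Real.Gamma_mul_Gamma_add_half (k + 3 / 2)
  rw [show (k : ℝ) + 3 / 2 + 1 / 2 = k + 2 by ring,
    show 2 * ((k : ℝ) + 3 / 2) = (2 * k + 2 : ℕ) + 1 by push_cast; ring,
    Real.Gamma_nat_eq_factorial,
    show (1 : ℝ) - ((2 * k + 2 : ℕ) + 1) = -(2 * k + 2 : ℕ) by ring,
    Real.rpow_neg zero_le_two, Real.rpow_natCast] at h
  rw [h]
  field_simp

theorem lintegral_pow_mul_K0 (k : ℕ) :
    ∫⁻ u in Ioi (0 : ℝ), ENNReal.ofReal (u ^ (2 * k + 2) * K0 u)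
      = ENNReal.ofReal (2 ^ (2 * k + 1) * Real.Gamma (k + 3 / 2) ^ 2) := by
  rw [lintegral_pow_mul_K0_eq_factorial_mul_lintegral,
    show 2 * k + 2 + 1 = 2 * (k + 1) + 1 by ring, lintegral_inv_cosh_pow,
    ← ofReal_integral_eq_lintegral_ofReal (integrable_inv_one_add_sq_pow _).integrableOn
      (ae_of_all _ fun _ => by positivity),
    integral_inv_one_add_sq_pow, ← ENNReal.ofReal_mul (by positivity)]
  congr 1
  have hdup := Gamma_add_three_halves_mul_Gamma_add_two k
  have : 0 < Real.Gamma (k + 2) := Real.Gamma_pos_of_pos (by positivity)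
  push_cast
  rw [show (k : ℝ) + 1 + 1 / 2 = k + 3 / 2 by ring, show (k : ℝ) + 1 + 1 = k + 2 by ring,
    mul_div_assoc', ← mul_assoc, ← hdup]
  field_simp
  ring

lemma pow_mul_K0_nonneg (k : ℕ) (u : ℝ) : 0 ≤ u ^ (2 * k + 2) * K0 u :=
  mul_nonneg (Even.pow_nonneg ⟨k + 1, by ring⟩ u) (K0_nonneg u)

lemma integrableOn_pow_mul_K0 (k : ℕ) :
    IntegrableOn (fun u : ℝ => u ^ (2 * k + 2) * K0 u) (Ioi 0) := by
  rw [IntegrableOn, ← lintegral_ofReal_ne_top_iff_integrable (by fun_prop)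
    (ae_of_all _ (pow_mul_K0_nonneg k)), lintegral_pow_mul_K0]
  exact ENNReal.ofReal_ne_top

theorem integral_pow_mul_K0 (k : ℕ) :
    ∫ u in Ioi (0 : ℝ), u ^ (2 * k + 2) * K0 u
      = 2 ^ (2 * k + 1) * Real.Gamma (k + 3 / 2) ^ 2 := by
  rw [integral_eq_lintegral_of_nonneg_ae (ae_of_all _ (pow_mul_K0_nonneg k)) (by fun_prop),
    lintegral_pow_mul_K0, ENNReal.toReal_ofReal (by positivity)]

lemma Gamma_add_half_sq_le {s : ℝ} (hs : 0 < s) :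
    Real.Gamma (s + 1 / 2) ^ 2 ≤ Real.Gamma s * Real.Gamma (s + 1) := by
  have h := Real.Gamma_mul_add_mul_le_rpow_Gamma_mul_rpow_Gamma hs (by linarith : 0 < s + 1)
    (by norm_num : (0 : ℝ) < 1 / 2) (by norm_num : (0 : ℝ) < 1 / 2) (by norm_num)
  rw [show 1 / 2 * s + 1 / 2 * (s + 1) = s + 1 / 2 by ring, ← Real.sqrt_eq_rpow,
    ← Real.sqrt_eq_rpow, ← Real.sqrt_mul (Real.Gamma_pos_of_pos hs).le] at h
  calc Real.Gamma (s + 1 / 2) ^ 2 ≤ √(Real.Gamma s * Real.Gamma (s + 1)) ^ 2 :=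
        pow_le_pow_left₀ (Real.Gamma_pos_of_pos (by linarith)).le h 2
    _ = Real.Gamma s * Real.Gamma (s + 1) :=
        Real.sq_sqrt (mul_pos (Real.Gamma_pos_of_pos hs) (Real.Gamma_pos_of_pos (by linarith))).le

lemma summable_hypergeometric_three_halves_three_halves_two {x : ℝ} (hx0 : 0 ≤ x)
    (hx1 : x < 1) :
    Summable fun k : ℕ =>
      Real.Gamma (k + 3 / 2) * Real.Gamma (k + 3 / 2) / Real.Gamma (k + 2) * x ^ k / k ! := by
  refine Summable.of_nonneg_of_le (fun k => by positivity) (fun k => ?_)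
    (summable_geometric_of_lt_one hx0 hx1)
  have hle := Gamma_add_half_sq_le (s := k + 1) (by positivity)
  rw [show (k : ℝ) + 1 + 1 / 2 = k + 3 / 2 by ring, show (k : ℝ) + 1 + 1 = k + 2 by ring,
    Real.Gamma_nat_eq_factorial] at hle
  have : 0 < Real.Gamma (k + 2) := Real.Gamma_pos_of_pos (by positivity)
  rw [div_mul_eq_mul_div, div_div, div_le_iff₀ (by positivity), ← sq]
  nlinarith [pow_nonneg hx0 k]

lemma mul_I1_mul_eq_tsum (c u : ℝ) :
    u * I1 (c * u) = ∑' k : ℕ,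
      c ^ (2 * k + 1) / (2 ^ (2 * k + 1) * k ! * Real.Gamma (k + 2)) * u ^ (2 * k + 2) := by
  rw [I1, ← tsum_mul_left, ← tsum_mul_left]
  refine tsum_congr fun k => ?_
  have : 0 < Real.Gamma (k + 2) := Real.Gamma_pos_of_pos (by positivity)
  have h4 : (4 : ℝ) ^ k = 2 ^ (2 * k) := by rw [pow_mul]; norm_num
  simp only [div_pow, mul_pow, h4]
  field_simp
  ring

theorem hasSum_integral_mul_I1_mul_K0 {c : ℝ} (hc0 : 0 ≤ c) (hc1 : c < 1) :
    HasSum (fun k : ℕ => c * (Real.Gamma (k + 3 / 2) * Real.Gamma (k + 3 / 2)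
        / Real.Gamma (k + 2) * (c ^ 2) ^ k / k !))
      (∫ u in Ioi (0 : ℝ), u * I1 (c * u) * K0 u) := by
  set F : ℕ → ℝ → ℝ := fun k u =>
    c ^ (2 * k + 1) / (2 ^ (2 * k + 1) * k ! * Real.Gamma (k + 2)) * (u ^ (2 * k + 2) * K0 u)
  have hF_int (k : ℕ) : IntegrableOn (F k) (Ioi 0) := (integrableOn_pow_mul_K0 k).const_mul _
  have hF_val (k : ℕ) : ∫ u in Ioi (0 : ℝ), F k u = c * (Real.Gamma (k + 3 / 2)
      * Real.Gamma (k + 3 / 2) / Real.Gamma (k + 2) * (c ^ 2) ^ k / k !) := by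
    have : 0 < Real.Gamma (k + 2) := Real.Gamma_pos_of_pos (by positivity)
    rw [integral_const_mul, integral_pow_mul_K0]
    field_simp
    ring
  have hF_norm (k : ℕ) : ∫ u in Ioi (0 : ℝ), ‖F k u‖ = ∫ u in Ioi (0 : ℝ), F k u :=
    integral_congr_ae (ae_of_all _ fun u => Real.norm_of_nonneg
      (mul_nonneg (by positivity) (pow_mul_K0_nonneg k u)))
  have h := hasSum_integral_of_summable_integral_norm hF_int (by
    simp_rw [hF_norm, hF_val]
    exact (summable_hypergeometric_three_halves_three_halves_two (sq_nonneg c)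
      (by nlinarith)).mul_left c)
  simp_rw [hF_val] at h
  have hexpand : (fun u => u * I1 (c * u) * K0 u) = fun u => ∑' k, F k u := by
    funext u
    rw [mul_I1_mul_eq_tsum, ← tsum_mul_right]
    exact tsum_congr fun k => mul_assoc _ _ _
  rwa [hexpand]

theorem stmt15 (c : ℝ) (hc0 : 0 ≤ c) (hc1 : c < 1) :
    ∫ u in Set.Ioi (0:ℝ), u * I1 (c * u) * K0 u
      = (π * c / 4) * twoF1 (3/2) (3/2) 2 (c^2) := by
  have hGamma_three_halves : Real.Gamma (3 / 2) = √π / 2 := by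
    rw [show (3 / 2 : ℝ) = 1 / 2 + 1 by norm_num, Real.Gamma_add_one (by norm_num),
      Real.Gamma_one_half_eq]
    ring
  rw [← (hasSum_integral_mul_I1_mul_K0 hc0 hc1).tsum_eq, tsum_mul_left, twoF1,
    hGamma_three_halves, Real.Gamma_two, div_mul_div_comm, Real.mul_self_sqrt pi_pos.le,
    ← mul_assoc]
  congr 1
  field_simp
  norm_num
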